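/- arXiv:2209.05478 — 3 statements merged into one kernel-verified Lean document; each statement's English description precedes it below -/
import Mathlib

section
/- Let n₁ ≤ n₂ ≤ n₃ be integers with n₁ ≥ 2 and 1/n₁ + 1/n₂ + 1/n₃ < 1. Writing c_{2n} = cos(2π/(2n)) = cos(π/n), the inequality (c_{2n₁} + c_{2n₂})² + 2·c_{2n₃} ≥ 2 holds. -/
/-! Write `c n = cos (π / n)`; it increases with `n`, with `c 2 = 0` and `c 3 = 1 / 2`.
If `n₁ ≥ 3` all three cosines are at least `1 / 2`, which already gives `1 + 1 ≥ 2`.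
If `n₁ = 2` the claim is `c n₂ ^ 2 + 2 c n₃ ≥ 2` with `1 / n₂ + 1 / n₃ < 1 / 2`, which forces
`n₂ = 3, n₃ ≥ 7`, or `n₂ = 4, n₃ ≥ 5`, or `n₃ ≥ n₂ ≥ 5`; in each case `c 3 = 1 / 2` and the
bound `cos x ≥ 1 - x ^ 2 / 2` with `π ^ 2 < 10` suffice. -/

open Real

lemma cos_pi_div_le_cos_pi_div {m n : ℕ} (hm : 1 ≤ m) (hmn : m ≤ n) :
    cos (π / m) ≤ cos (π / n) := by
  have hm₀ : (0 : ℝ) < m := by exact_mod_cast hm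
  apply cos_le_cos_of_nonneg_of_le_pi (by positivity)
  · exact div_le_self pi_pos.le (by exact_mod_cast hm)
  · exact div_le_div_of_nonneg_left pi_pos.le hm₀ (by exact_mod_cast hmn)

lemma half_le_cos_pi_div {n : ℕ} (hn : 3 ≤ n) : 1 / 2 ≤ cos (π / n) := by
  simpa [cos_pi_div_three] using cos_pi_div_le_cos_pi_div (m := 3) (by norm_num) hn

lemma one_sub_five_div_sq_le_cos_pi_div (n : ℕ) : 1 - 5 / (n : ℝ) ^ 2 ≤ cos (π / n) := by
  have hπ : π ^ 2 / 2 ≤ 5 := by nlinarith [pi_pos, pi_lt_d2]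
  calc 1 - 5 / (n : ℝ) ^ 2 ≤ 1 - π ^ 2 / 2 / (n : ℝ) ^ 2 := by gcongr
    _ = 1 - (π / n) ^ 2 / 2 := by ring
    _ ≤ cos (π / n) := one_sub_sq_div_two_le_cos

lemma one_sub_five_div_sq_le_cos_pi_div_of_le {m n : ℕ} (hm : 1 ≤ m) (hmn : m ≤ n) :
    1 - 5 / (m : ℝ) ^ 2 ≤ cos (π / n) :=
  (one_sub_five_div_sq_le_cos_pi_div m).trans (cos_pi_div_le_cos_pi_div hm hmn)

lemma Nat.lt_of_one_div_lt_one_div {k n : ℕ} (hn : 0 < n) (h : (1 : ℝ) / n < 1 / k) :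
    k < n := by
  exact_mod_cast _root_.lt_of_one_div_lt_one_div (by exact_mod_cast hn) h

lemma two_le_sq_cos_pi_div_add_two_mul_cos_pi_div {n₂ n₃ : ℕ} (h2 : 2 ≤ n₂) (h23 : n₂ ≤ n₃)
    (hhyp : (1 : ℝ) / n₂ + 1 / n₃ < 1 / 2) :
    2 ≤ cos (π / n₂) ^ 2 + 2 * cos (π / n₃) := by
  have hn₃ : 0 < n₃ := by omega
  rcases (by omega : n₂ = 2 ∨ n₂ = 3 ∨ n₂ = 4 ∨ 5 ≤ n₂) with rfl | rfl | rfl | h5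
  · have : (0 : ℝ) ≤ 1 / n₃ := by positivity
    norm_num at hhyp
    linarith
  · have h7 : 7 ≤ n₃ := Nat.lt_of_one_div_lt_one_div hn₃ (by norm_num at hhyp ⊢; linarith)
    have hc₃ := one_sub_five_div_sq_le_cos_pi_div_of_le (by norm_num) h7
    norm_num [cos_pi_div_three] at hc₃ ⊢
    linarith
  · have h5 : 5 ≤ n₃ := Nat.lt_of_one_div_lt_one_div hn₃ (by norm_num at hhyp ⊢; linarith)
    have hc₂ := one_sub_five_div_sq_le_cos_pi_div (n := 4)
    have hc₃ := one_sub_five_div_sq_le_cos_pi_div_of_le (by norm_num) h5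
    norm_num at hc₂ hc₃ ⊢
    nlinarith
  · have hc₂ := one_sub_five_div_sq_le_cos_pi_div_of_le (by norm_num) h5
    have hc₃ := one_sub_five_div_sq_le_cos_pi_div_of_le (by norm_num) (h5.trans h23)
    norm_num at hc₂ hc₃
    nlinarith

theorem cos_inequality_hyperbolic_triangle (n₁ n₂ n₃ : ℕ)
    (h2 : 2 ≤ n₁) (h12 : n₁ ≤ n₂) (h23 : n₂ ≤ n₃)
    (hhyp : (1 : ℝ) / n₁ + 1 / n₂ + 1 / n₃ < 1) :
    (Real.cos (π / n₁) + Real.cos (π / n₂)) ^ 2 + 2 * Real.cos (π / n₃) ≥ 2 := by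
  rcases h2.eq_or_lt with rfl | h3
  · have hhyp' : (1 : ℝ) / n₂ + 1 / n₃ < 1 / 2 := by norm_num at hhyp ⊢; linarith
    simpa using two_le_sq_cos_pi_div_add_two_mul_cos_pi_div h12 h23 hhyp'
  · have hc₁ := half_le_cos_pi_div h3
    have hc₂ := half_le_cos_pi_div (h3.trans_le h12)
    have hc₃ := half_le_cos_pi_div ((h3.trans_le h12).trans_le h23)
    nlinarith
end

section
/- Let n₁ ≤ n₂ ≤ n₃ be integers with n₁ ≥ 2 and 1/n₁ + 1/n₂ + 1/n₃ < 1. Then the quadratic polynomial r² + 2r(c_{2n₁} − c_{2n₂}) + 2(1 − 2c_{2n₁}c_{2n₂} − c_{2n₃}) in r, where c_{2n} = cos(π/n), has a real root; equivalently, its discriminant is nonnegative. -/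
/-!
Writing `c n = cos (π / n)`, the discriminant equals `4 ((c n₁ + c n₂)² + 2 c n₃ - 2)`, so it
suffices that `(c n₁ + c n₂)² + 2 c n₃ ≥ 2`. Since `c` increases with `n`, this reduces to the
minimal ordered hyperbolic triples: `(2, 3, 7)` needs `c 7 ≥ 7/8`, `(2, 4, 5)` needs
`c 4 ^ 2 = 1/2` and `c 5 ≥ 3/4`, and once `n₁ ≥ 3` all three cosines are at least `c 3 = 1/2`.
-/

open Real

lemma cos_pi_div_natCast_le_cos_pi_div_natCast {m n : ℕ} (hm : 0 < m) (hmn : m ≤ n) :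
    cos (π / m) ≤ cos (π / n) := by
  have hm' : (1 : ℝ) ≤ m := by exact_mod_cast hm
  apply cos_le_cos_of_nonneg_of_le_pi (by positivity)
  · exact div_le_self pi_pos.le hm'
  · gcongr

lemma seven_eighths_le_cos_pi_div_seven : 7 / 8 ≤ cos (π / 7) := by
  nlinarith [one_sub_sq_div_two_le_cos (x := π / 7), pi_lt_d2, pi_pos]

lemma three_quarters_le_cos_pi_div_five : 3 / 4 ≤ cos (π / 5) := by
  nlinarith [one_sub_sq_div_two_le_cos (x := π / 5), pi_lt_d2, pi_pos]

lemma hyperbolic_triple_cases {n₁ n₂ n₃ : ℕ} (h2 : 2 ≤ n₁) (h12 : n₁ ≤ n₂) (h23 : n₂ ≤ n₃)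
    (hhyp : (1 : ℝ) / n₁ + 1 / n₂ + 1 / n₃ < 1) :
    (n₁ = 2 ∧ n₂ = 3 ∧ 7 ≤ n₃) ∨ (n₁ = 2 ∧ 4 ≤ n₂ ∧ 5 ≤ n₃) ∨ 3 ≤ n₁ := by
  obtain rfl | h3 : n₁ = 2 ∨ 3 ≤ n₁ := by omega
  · have hn₂ : 3 ≤ n₂ := by
      by_contra
      obtain rfl : n₂ = 2 := by omega
      norm_num at hhyp
      linarith [show (0 : ℝ) ≤ 1 / n₃ by positivity]
    by_contra! hsmall
    have hn₃ : n₃ ≤ 6 := by omega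
    have hn₂' : n₂ ≤ 6 := by omega
    interval_cases n₂ <;> interval_cases n₃ <;> first | omega | norm_num at hhyp
  · exact Or.inr (Or.inr h3)

lemma two_le_sq_cos_add_cos_add_two_mul_cos {n₁ n₂ n₃ : ℕ} (h2 : 2 ≤ n₁) (h12 : n₁ ≤ n₂)
    (h23 : n₂ ≤ n₃) (hhyp : (1 : ℝ) / n₁ + 1 / n₂ + 1 / n₃ < 1) :
    2 ≤ (cos (π / n₁) + cos (π / n₂)) ^ 2 + 2 * cos (π / n₃) := by
  rcases hyperbolic_triple_cases h2 h12 h23 hhyp with ⟨rfl, rfl, h7⟩ | ⟨rfl, h4, h5⟩ | h3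
  · have hc₃ := cos_pi_div_natCast_le_cos_pi_div_natCast (by norm_num) h7
    push_cast at hc₃ ⊢
    rw [cos_pi_div_two, cos_pi_div_three]
    linarith [seven_eighths_le_cos_pi_div_seven]
  · have hc₂ := cos_pi_div_natCast_le_cos_pi_div_natCast (by norm_num) h4
    have hc₃ := cos_pi_div_natCast_le_cos_pi_div_natCast (by norm_num) h5
    push_cast at hc₂ hc₃ ⊢
    rw [cos_pi_div_two, zero_add]
    rw [cos_pi_div_four] at hc₂
    have hsqrt2 : √2 ^ 2 = 2 := sq_sqrt (by norm_num)
    nlinarith [sqrt_nonneg 2, three_quarters_le_cos_pi_div_five]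
  · have hc : ∀ {n : ℕ}, n₁ ≤ n → 1 / 2 ≤ cos (π / n) := fun hn => by
      simpa using cos_pi_div_natCast_le_cos_pi_div_natCast (m := 3) (by norm_num) (h3.trans hn)
    nlinarith [hc le_rfl, hc h12, hc (h12.trans h23)]

lemma exists_sq_add_mul_add_eq_zero {b c : ℝ} (h : 0 ≤ b ^ 2 - 4 * c) :
    ∃ r : ℝ, r ^ 2 + b * r + c = 0 := by
  obtain ⟨r, hr⟩ := exists_quadratic_eq_zero (b := b) (c := c) one_ne_zero
    ⟨√(b ^ 2 - 4 * c), by rw [discrim, mul_self_sqrt h]; ring⟩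
  exact ⟨r, by linear_combination hr⟩

theorem quadratic_has_real_root (n₁ n₂ n₃ : ℕ)
    (h2 : 2 ≤ n₁) (h12 : n₁ ≤ n₂) (h23 : n₂ ≤ n₃)
    (hhyp : (1 : ℝ) / n₁ + 1 / n₂ + 1 / n₃ < 1) :
    (2 * (Real.cos (π / n₁) - Real.cos (π / n₂))) ^ 2 -
      4 * (2 * (1 - 2 * Real.cos (π / n₁) * Real.cos (π / n₂) - Real.cos (π / n₃))) ≥ 0 ∧
    ∃ r : ℝ, r ^ 2 + 2 * r * (Real.cos (π / n₁) - Real.cos (π / n₂)) +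
      2 * (1 - 2 * Real.cos (π / n₁) * Real.cos (π / n₂) - Real.cos (π / n₃)) = 0 := by
  have hkey := two_le_sq_cos_add_cos_add_two_mul_cos h2 h12 h23 hhyp
  have hdisc : (2 * (cos (π / n₁) - cos (π / n₂))) ^ 2 -
      4 * (2 * (1 - 2 * cos (π / n₁) * cos (π / n₂) - cos (π / n₃))) ≥ 0 := by
    linear_combination 4 * hkey
  obtain ⟨r, hr⟩ := exists_sq_add_mul_add_eq_zero hdisc
  exact ⟨hdisc, r, by linear_combination hr⟩
end

section
/- Let m ≥ 3 be odd, let p be a prime divisor of m, and let F be a finite field of characteristic p containing a square root i of −1. Define ρ on the dihedral group T_{2,2,m} = ⟨x, y | x², y², (xy)^m⟩ by sending x to ±[[i,0],[0,−i]] and y to ±[[i,i],[0,−i]] in PSL(2,F). Then ρ is a well-defined group homomorphism whose image is non-abelian: ρ(x) and ρ(y) have order 2, ρ(xy) = ±[[1,1],[0,1]] has order p, and ρ(xy) ≠ ρ(yx). -/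
/-- The relations of the triangle group `T_{n₁,n₂,n₃}`. -/
def triangleRels (n₁ n₂ n₃ : ℕ) : Set (FreeGroup (Fin 2)) :=
  {(FreeGroup.of 0) ^ n₁, (FreeGroup.of 1) ^ n₂, (FreeGroup.of 0 * FreeGroup.of 1) ^ n₃}

/-- The triangle group `T_{n₁,n₂,n₃} = ⟨x, y ∣ x^{n₁}, y^{n₂}, (xy)^{n₃}⟩`. -/
def TriangleGroup (n₁ n₂ n₃ : ℕ) : Type := PresentedGroup (triangleRels n₁ n₂ n₃)

instance (n₁ n₂ n₃ : ℕ) : Group (TriangleGroup n₁ n₂ n₃) :=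
  inferInstanceAs (Group (PresentedGroup (triangleRels n₁ n₂ n₃)))

open Matrix
open scoped MatrixGroups

/-! In `SL(2, F)` we have `X² = Y² = -1` and `XY = -U`, and `-1` is central, so the images
`x, y` in `PSL(2, F)` satisfy `x² = y² = 1` and `xy = U`. As `Uᵏ = !![1, k; 0, 1]`, the image of `U`
has order `p`, which divides `m`; hence `x, y` satisfy the relations of `T_{2,2,m}`. Finally
`xy = yx` would force `(xy)² = x y² x = 1`, impossible as `p` is odd. -/

namespace Matrix.SpecialLinearGroup

variable {n R : Type*} [Fintype n] [DecidableEq n] [CommRing R]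

theorem apply_eq_zero_of_mem_center {A : SpecialLinearGroup n R}
    (hA : A ∈ Subgroup.center (SpecialLinearGroup n R)) {a b : n} (hab : a ≠ b) : A a b = 0 := by
  rw [← scalar_eq_self_of_mem_center hA a]
  simp [hab]

theorem apply_eq_apply_of_mem_center {A : SpecialLinearGroup n R}
    (hA : A ∈ Subgroup.center (SpecialLinearGroup n R)) (a b : n) : A a a = A b b := by
  rw [← scalar_eq_self_of_mem_center hA a]
  simp

theorem mk_ne_one_of_apply_ne_zero {A : SpecialLinearGroup n R} {a b : n} (hab : a ≠ b)
    (hA : A a b ≠ 0) : (A : ProjectiveSpecialLinearGroup n R) ≠ 1 := fun h ↦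
  hA (apply_eq_zero_of_mem_center ((QuotientGroup.eq_one_iff A).mp h) hab)

theorem mk_ne_one_of_apply_ne_apply {A : SpecialLinearGroup n R} {a b : n}
    (hA : A a a ≠ A b b) : (A : ProjectiveSpecialLinearGroup n R) ≠ 1 := fun h ↦
  hA (apply_eq_apply_of_mem_center ((QuotientGroup.eq_one_iff A).mp h) a b)

theorem neg_one_mem_center [Fact (Even (Fintype.card n))] :
    (-1 : SpecialLinearGroup n R) ∈ Subgroup.center (SpecialLinearGroup n R) :=
  Subgroup.mem_center_iff.mpr fun g ↦ by rw [mul_neg_one, neg_one_mul]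

theorem mk_neg [Fact (Even (Fintype.card n))] (A : SpecialLinearGroup n R) :
    (↑(-A) : ProjectiveSpecialLinearGroup n R) = A := by
  rw [← neg_one_mul, QuotientGroup.mk_mul, (QuotientGroup.eq_one_iff _).mpr neg_one_mem_center,
    one_mul]

end Matrix.SpecialLinearGroup

theorem Matrix.upper_unitriangular_fin_two_pow {R : Type*} [Semiring R] (b : R) (k : ℕ) :
    (!![1, b; 0, 1] : Matrix (Fin 2) (Fin 2) R) ^ k = !![1, k * b; 0, 1] := by
  induction k with
  | zero => simp [one_fin_two]
  | succ k ih => simp [pow_succ', ih, add_mul]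

theorem mul_ne_mul_of_sq_eq_one {M : Type*} [Monoid M] {a b : M} (ha : a ^ 2 = 1) (hb : b ^ 2 = 1)
    (hab : ¬orderOf (a * b) ∣ 2) : a * b ≠ b * a := by
  refine fun h ↦ hab (orderOf_dvd_of_pow_eq_one ?_)
  calc (a * b) ^ 2 = a * b * (b * a) := by rw [sq, ← h]
    _ = a * b ^ 2 * a := by simp only [sq, mul_assoc]
    _ = 1 := by rw [hb, mul_one, ← sq, ha]

namespace TriangleGroup

variable {G : Type*} [Group G] {n₁ n₂ n₃ : ℕ}

def lift (a b : G) (ha : a ^ n₁ = 1) (hb : b ^ n₂ = 1) (hab : (a * b) ^ n₃ = 1) :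
    TriangleGroup n₁ n₂ n₃ →* G :=
  PresentedGroup.toGroup (f := ![a, b]) <| by
    rintro r (rfl | rfl | rfl) <;> simpa

variable (a b : G) (ha : a ^ n₁ = 1) (hb : b ^ n₂ = 1) (hab : (a * b) ^ n₃ = 1)

@[simp]
theorem lift_of_zero : lift a b ha hb hab (PresentedGroup.of 0) = a :=
  PresentedGroup.toGroup.of _

@[simp]
theorem lift_of_one : lift a b ha hb hab (PresentedGroup.of 1) = b :=
  PresentedGroup.toGroup.of _

theorem lift_of_zero_mul_of_one :
    lift a b ha hb hab (PresentedGroup.of 0 * PresentedGroup.of 1) = a * b :=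
  (map_mul _ _ _).trans (congr_arg₂ (· * ·) (lift_of_zero ..) (lift_of_one ..))

theorem lift_of_one_mul_of_zero :
    lift a b ha hb hab (PresentedGroup.of 1 * PresentedGroup.of 0) = b * a :=
  (map_mul _ _ _).trans (congr_arg₂ (· * ·) (lift_of_one ..) (lift_of_zero ..))

end TriangleGroup

open Matrix.SpecialLinearGroup in
theorem dihedral_rep_into_PSL2_general (m : ℕ) (hmodd : Odd m)
    (p : ℕ) [Fact p.Prime] (hpm : p ∣ m)
    (F : Type*) [Field F] [CharP F p]
    (i : F) (hi : i ^ 2 = -1)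
    (X Y U : Matrix.SpecialLinearGroup (Fin 2) F)
    (hX : (X : Matrix (Fin 2) (Fin 2) F) = !![i, 0; 0, -i])
    (hY : (Y : Matrix (Fin 2) (Fin 2) F) = !![i, i; 0, -i])
    (hU : (U : Matrix (Fin 2) (Fin 2) F) = !![1, 1; 0, 1]) :
    ∃ ρ : TriangleGroup 2 2 m →* PSL(2, F),
      ρ (PresentedGroup.of 0) = QuotientGroup.mk X ∧
      ρ (PresentedGroup.of 1) = QuotientGroup.mk Y ∧
      ρ (PresentedGroup.of 0 * PresentedGroup.of 1) = QuotientGroup.mk U ∧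
      orderOf (ρ (PresentedGroup.of 0)) = 2 ∧
      orderOf (ρ (PresentedGroup.of 1)) = 2 ∧
      orderOf (ρ (PresentedGroup.of 0 * PresentedGroup.of 1)) = p ∧
      ρ (PresentedGroup.of 0 * PresentedGroup.of 1) ≠
        ρ (PresentedGroup.of 1 * PresentedGroup.of 0) := by
  have hp2 : p ≠ 2 := by rintro rfl; exact hmodd.not_two_dvd_nat hpm
  have hi0 : i ≠ 0 := by rintro rfl; simp at hi
  obtain ⟨hXX, hYY, hXY⟩ : X * X = -1 ∧ Y * Y = -1 ∧ X * Y = -U := by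
    refine ⟨Subtype.ext ?_, Subtype.ext ?_, Subtype.ext ?_⟩ <;>
      simp only [coe_mul, coe_neg, coe_one, hX, hY, hU, mul_fin_two, one_fin_two, neg_of] <;>
      simp [← sq, hi]
  have hUp : U ^ p = 1 := by
    ext : 1; simp [hU, upper_unitriangular_fin_two_pow, one_fin_two]
  have hx : (X : PSL(2, F)) ^ 2 = 1 := by rw [sq, ← QuotientGroup.mk_mul, hXX, mk_neg, QuotientGroup.mk_one]
  have hy : (Y : PSL(2, F)) ^ 2 = 1 := by rw [sq, ← QuotientGroup.mk_mul, hYY, mk_neg, QuotientGroup.mk_one]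
  have hxy : (X : PSL(2, F)) * Y = U := by rw [← QuotientGroup.mk_mul, hXY, mk_neg]
  have ou : orderOf (U : PSL(2, F)) = p :=
    orderOf_eq_prime (by rw [← QuotientGroup.mk_pow, hUp, QuotientGroup.mk_one])
      (mk_ne_one_of_apply_ne_zero zero_ne_one (by simp [hU]))
  refine ⟨TriangleGroup.lift _ _ hx hy ?_, ?_⟩
  · rw [hxy, ← orderOf_dvd_iff_pow_eq_one, ou]
    exact hpm
  rw [TriangleGroup.lift_of_zero, TriangleGroup.lift_of_one,
    TriangleGroup.lift_of_zero_mul_of_one, TriangleGroup.lift_of_one_mul_of_zero]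
  refine ⟨rfl, rfl, hxy, orderOf_eq_prime hx ?_, orderOf_eq_prime hy ?_, hxy ▸ ou,
    mul_ne_mul_of_sq_eq_one hx hy ?_⟩
  · refine mk_ne_one_of_apply_ne_apply (a := 0) (b := 1) fun h ↦ hi0 ?_
    rw [hX] at h
    exact (Ring.eq_self_iff_eq_zero_of_char_ne_two (ringChar.eq F p ▸ hp2)).mp h.symm
  · exact mk_ne_one_of_apply_ne_zero zero_ne_one (by simpa [hY])
  · rw [hxy, ou]
    exact fun h ↦ hp2 ((Nat.prime_dvd_prime_iff_eq Fact.out Nat.prime_two).mp h)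

theorem dihedral_rep_into_PSL2 (m : ℕ) (hm : 3 ≤ m) (hmodd : Odd m)
    (p : ℕ) [Fact p.Prime] (hpm : p ∣ m)
    (F : Type*) [Field F] [Fintype F] [CharP F p]
    (i : F) (hi : i ^ 2 = -1)
    (X Y U : Matrix.SpecialLinearGroup (Fin 2) F)
    (hX : (X : Matrix (Fin 2) (Fin 2) F) = !![i, 0; 0, -i])
    (hY : (Y : Matrix (Fin 2) (Fin 2) F) = !![i, i; 0, -i])
    (hU : (U : Matrix (Fin 2) (Fin 2) F) = !![1, 1; 0, 1]) :
    ∃ ρ : TriangleGroup 2 2 m →* PSL(2, F),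
      ρ (PresentedGroup.of 0) = QuotientGroup.mk X ∧
      ρ (PresentedGroup.of 1) = QuotientGroup.mk Y ∧
      ρ (PresentedGroup.of 0 * PresentedGroup.of 1) = QuotientGroup.mk U ∧
      orderOf (ρ (PresentedGroup.of 0)) = 2 ∧
      orderOf (ρ (PresentedGroup.of 1)) = 2 ∧
      orderOf (ρ (PresentedGroup.of 0 * PresentedGroup.of 1)) = p ∧
      ρ (PresentedGroup.of 0 * PresentedGroup.of 1) ≠
        ρ (PresentedGroup.of 1 * PresentedGroup.of 0) :=
  dihedral_rep_into_PSL2_general m hmodd p hpm F i hi X Y U hX hY hU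
end
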